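/- arXiv:2211.03558 — 3 statements merged into one kernel-verified Lean document; each statement's English description precedes it below -/
import Mathlib

section
/- Let n ≥ 2, r > 0, and let Δ_r ⊂ ℝⁿ be the caterpillar bending polytope defined by the inequalities ℓ_{i,j}(u) ≥ 0 (with ℓ_{1,0}(u) = 2r − u₁, ℓ_{2,0}(u) = 4r − u₁ − u₂, ℓ_{1,2}(u) = u₂ − u₁, among others). If u ∈ Δ_r satisfies ℓ_{1,0}(u) = 0, then also ℓ_{2,0}(u) = 0 and ℓ_{1,2}(u) = 0, and u₁ = u₂ = 2r. In particular the hyperplane {ℓ_{1,0} = 0} meets Δ_r in a face of codimension at least two. -/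
theorem stmt5_general (n : ℕ) (hn : 2 ≤ n) (r : ℝ) (u : ℕ → ℝ)
    (hmem0 : ∀ i, 1 ≤ i → i ≤ n + 1 → 0 ≤ 2 * (i : ℝ) * r - u (i - 1) - u i)
    (hmem2 : ∀ i, i ≤ n → 0 ≤ u (i + 1) - u i)
    (hface : 2 * r - u 1 = 0) :
    4 * r - u 1 - u 2 = 0 ∧ u 2 - u 1 = 0 ∧ u 1 = 2 * r ∧ u 2 = 2 * r := by
  have hsum : u 1 + u 2 ≤ 4 * r := by
    have h := hmem0 2 (by omega) (by omega)
    norm_num at h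
    linarith
  have hmono : u 1 ≤ u 2 := by linarith [hmem2 1 (by omega)]
  refine ⟨?_, ?_, ?_, ?_⟩ <;> linarith

/-- If a point `u` of the equilateral caterpillar bending polytope `Δ_r` satisfies
`ℓ_{1,0}(u) = 2r − u₁ = 0`, then also `ℓ_{2,0}(u) = 0`, `ℓ_{1,2}(u) = 0`, and
`u₁ = u₂ = 2r`; so `{ℓ_{1,0} = 0}` meets `Δ_r` in a face of codimension at least two. -/
theorem stmt5 (n : ℕ) (hn : 2 ≤ n) (r : ℝ) (hr : 0 < r) (u : ℕ → ℝ)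
    (h0 : u 0 = 0) (htop : u (n + 1) = ((n : ℝ) + 1) * r)
    (hmem0 : ∀ i, 1 ≤ i → i ≤ n + 1 → 0 ≤ 2 * (i : ℝ) * r - u (i - 1) - u i)
    (hmem1 : ∀ i, 1 ≤ i → i ≤ n + 1 → 0 ≤ 2 * r - u i + u (i - 1))
    (hmem2 : ∀ i, i ≤ n → 0 ≤ u (i + 1) - u i)
    (hface : 2 * r - u 1 = 0) :
    4 * r - u 1 - u 2 = 0 ∧ u 2 - u 1 = 0 ∧ u 1 = 2 * r ∧ u 2 = 2 * r :=
  stmt5_general n hn r u hmem0 hmem2 hface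
end

section
/- Let n ≥ 3 and r > 0, and let Δ_r ⊂ ℝⁿ be the caterpillar bending polytope with defining functions ℓ_{i,j} as above (equilateral case). Fix i with 2 ≤ i ≤ n−1 (if n ≥ 3). Then there exists a point u ∈ Δ_r with ℓ_{i,0}(u) = 0 and ℓ_{i',j'}(u) > 0 for every other pair (i',j'). In particular the hyperplane {ℓ_{i,0} = 0} contains a facet of Δ_r. (For example, u obtained from the center (r, 2r, ..., nr) by replacing u_{i−1} with (i−1+1/2)r and u_i with (i+1/2)r works.) -/
/-!
Raise the two coordinates `u_{i-1}, u_i` of the center `u_k = k r` of `Δ_r` by `r / 2`.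
At the center every defining function equals `r`; the bump lowers `ℓ_{i,0}` by `r` and
changes every other `ℓ_{i',j'}` by at most `r / 2`, so exactly `ℓ_{i,0}` vanishes.
-/

noncomputable def bumpedCenter (r : ℝ) (i k : ℕ) : ℝ :=
  k * r + if k + 1 = i ∨ k = i then r / 2 else 0

section bumpedCenter

variable {r : ℝ} {i : ℕ}

lemma bumpedCenter_zero (hi : 2 ≤ i) : bumpedCenter r i 0 = 0 := by
  simp only [bumpedCenter]
  split_ifs <;> first | omega | simp

lemma bumpedCenter_of_lt {k : ℕ} (hk : i < k) : bumpedCenter r i k = k * r := by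
  simp only [bumpedCenter]
  split_ifs <;> first | omega | simp

lemma two_mul_sub_bumpedCenter_eq_zero (hi : 1 ≤ i) :
    2 * (i : ℝ) * r - bumpedCenter r i (i - 1) - bumpedCenter r i i = 0 := by
  simp only [bumpedCenter, Nat.sub_add_cancel hi, true_or, or_true, if_true,
    Nat.cast_sub hi, Nat.cast_one]
  ring

variable (hr : 0 < r)
include hr

lemma two_mul_sub_bumpedCenter_pos {k : ℕ} (hk : k + 1 ≠ i) :
    0 < 2 * ((k + 1 : ℕ) : ℝ) * r - bumpedCenter r i k - bumpedCenter r i (k + 1) := by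
  simp only [bumpedCenter]
  split_ifs <;> first | omega | (push_cast; linarith)

lemma two_mul_sub_bumpedCenter_add_pos (k : ℕ) :
    0 < 2 * r - bumpedCenter r i (k + 1) + bumpedCenter r i k := by
  simp only [bumpedCenter]
  split_ifs <;> (push_cast; linarith)

lemma bumpedCenter_succ_sub_pos (k : ℕ) :
    0 < bumpedCenter r i (k + 1) - bumpedCenter r i k := by
  simp only [bumpedCenter]
  split_ifs <;> (push_cast; linarith)

end bumpedCenter

theorem stmt6_general (n : ℕ) (r : ℝ) (hr : 0 < r) (i : ℕ)
    (hi1 : 2 ≤ i) (hi2 : i ≤ n - 1) :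
    ∃ u : ℕ → ℝ, u 0 = 0 ∧ u (n + 1) = ((n : ℝ) + 1) * r ∧
      (2 * (i : ℝ) * r - u (i - 1) - u i = 0) ∧
      (∀ i', 1 ≤ i' → i' ≤ n + 1 → i' ≠ i → 0 < 2 * (i' : ℝ) * r - u (i' - 1) - u i') ∧
      (∀ i', 1 ≤ i' → i' ≤ n + 1 → 0 < 2 * r - u i' + u (i' - 1)) ∧
      (∀ i', i' ≤ n → 0 < u (i' + 1) - u i') := by
  refine ⟨bumpedCenter r i, bumpedCenter_zero hi1, ?_,
    two_mul_sub_bumpedCenter_eq_zero (by omega), ?_, ?_,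
    fun k _ => bumpedCenter_succ_sub_pos hr k⟩
  · rw [bumpedCenter_of_lt (by omega)]
    push_cast
    ring
  · intro i' hi' _ hne
    obtain ⟨k, rfl⟩ := Nat.exists_eq_add_of_le' hi'
    simpa only [Nat.add_sub_cancel] using two_mul_sub_bumpedCenter_pos hr hne
  · intro i' hi' _
    obtain ⟨k, rfl⟩ := Nat.exists_eq_add_of_le' hi'
    simpa only [Nat.add_sub_cancel] using two_mul_sub_bumpedCenter_add_pos hr k

/-- For `2 ≤ i ≤ n−1`, there is a point `u` of the equilateral caterpillar bending polytope
with `ℓ_{i,0}(u) = 0` and all the other defining functions strictly positive; so the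
hyperplane `{ℓ_{i,0} = 0}` contains a facet of `Δ_r`. -/
theorem stmt6 (n : ℕ) (hn : 3 ≤ n) (r : ℝ) (hr : 0 < r) (i : ℕ)
    (hi1 : 2 ≤ i) (hi2 : i ≤ n - 1) :
    ∃ u : ℕ → ℝ, u 0 = 0 ∧ u (n + 1) = ((n : ℝ) + 1) * r ∧
      (2 * (i : ℝ) * r - u (i - 1) - u i = 0) ∧
      (∀ i', 1 ≤ i' → i' ≤ n + 1 → i' ≠ i → 0 < 2 * (i' : ℝ) * r - u (i' - 1) - u i') ∧
      (∀ i', 1 ≤ i' → i' ≤ n + 1 → 0 < 2 * r - u i' + u (i' - 1)) ∧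
      (∀ i', i' ≤ n → 0 < u (i' + 1) - u i') :=
  stmt6_general n r hr i hi1 hi2
end

section
/- Consider the Laurent polynomial W(y₁, y₂, y₃) = y₂ + (y₁ + 1/y₁ + y₃ + 1/y₃)/y₂ on (ℂ*)³. The set of critical values of W is exactly {4, −4, 4i, −4i}. -/
noncomputable def W3 : ℂ → ℂ → ℂ → ℂ :=
  fun y1 y2 y3 => y2 + (y1 + 1 / y1 + y3 + 1 / y3) / y2

/-!
`W` depends on `y₁` and `y₃` only through `f(y₁) + f(y₃)` with `f(t) = t + 1/t`, so at a critical
point `f'(y₁) = f'(y₃) = 0`, i.e. `y₁, y₃ ∈ {±1}`, and `y₂² = S := f(y₁) + f(y₃) ∈ {4, 0, -4}`.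
There `W = y₂ + S/y₂ = 2y₂`, so the critical values are the `w ≠ 0` with `w² ∈ {16, 0, -16}`,
i.e. the fourth roots of `256`.
-/

open Complex

lemma hasDerivAt_add_one_div {𝕜 : Type*} [NontriviallyNormedField 𝕜] {t : 𝕜} (ht : t ≠ 0) :
    HasDerivAt (fun s => s + 1 / s) (1 - 1 / t ^ 2) t := by
  simpa only [Pi.add_def, one_div, sub_eq_add_neg] using
    (hasDerivAt_id' (x := t)).add (hasDerivAt_inv ht)

lemma one_sub_div_sq_eq_zero_iff {K : Type*} [Field K] {a y : K} (hy : y ≠ 0) :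
    1 - a / y ^ 2 = 0 ↔ y ^ 2 = a := by
  rw [sub_eq_zero, eq_comm, div_eq_one_iff_eq (pow_ne_zero 2 hy), eq_comm]

lemma sq_eq_sixteen_or_sq_eq_neg_sixteen_iff (w : ℂ) :
    w ^ 2 = 16 ∨ w ^ 2 = -16 ↔ w = 4 ∨ w = -4 ∨ w = 4 * I ∨ w = -4 * I := by
  have h16 : (16 : ℂ) = 4 ^ 2 := by norm_num
  have hneg16 : (-16 : ℂ) = (4 * I) ^ 2 := by rw [mul_pow, I_sq]; norm_num
  rw [hneg16, h16, sq_eq_sq_iff_eq_or_eq_neg, sq_eq_sq_iff_eq_or_eq_neg, neg_mul, or_assoc]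

lemma W3_comm (y1 y2 y3 : ℂ) : W3 y1 y2 y3 = W3 y3 y2 y1 := by
  simp only [W3]
  ring

lemma hasDerivAt_W3_fst {y1 : ℂ} (y2 y3 : ℂ) (h1 : y1 ≠ 0) :
    HasDerivAt (fun t => W3 t y2 y3) ((1 - 1 / y1 ^ 2) / y2) y1 :=
  ((((hasDerivAt_add_one_div h1).add_const y3).add_const (1 / y3)).div_const y2).const_add y2

lemma hasDerivAt_W3_snd (y1 : ℂ) {y2 : ℂ} (y3 : ℂ) (h2 : y2 ≠ 0) :
    HasDerivAt (fun t => W3 y1 t y3) (1 - (y1 + 1 / y1 + y3 + 1 / y3) / y2 ^ 2) y2 := by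
  simpa only [Pi.add_def, W3, div_eq_mul_inv, sub_eq_add_neg, mul_neg] using
    (hasDerivAt_id' (x := y2)).add ((hasDerivAt_inv h2).const_mul (y1 + 1 / y1 + y3 + 1 / y3))

lemma hasDerivAt_W3_thd (y1 y2 : ℂ) {y3 : ℂ} (h3 : y3 ≠ 0) :
    HasDerivAt (fun t => W3 y1 y2 t) ((1 - 1 / y3 ^ 2) / y2) y3 := by
  simpa only [W3_comm y1] using hasDerivAt_W3_fst y2 y1 h3

lemma deriv_W3_eq_zero_iff {y1 y2 y3 : ℂ} (h1 : y1 ≠ 0) (h2 : y2 ≠ 0) (h3 : y3 ≠ 0) :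
    (deriv (fun t => W3 t y2 y3) y1 = 0 ∧ deriv (fun t => W3 y1 t y3) y2 = 0 ∧
        deriv (fun t => W3 y1 y2 t) y3 = 0) ↔
      (y1 = 1 ∨ y1 = -1) ∧ (y3 = 1 ∨ y3 = -1) ∧ y2 ^ 2 = y1 + 1 / y1 + y3 + 1 / y3 := by
  rw [(hasDerivAt_W3_fst y2 y3 h1).deriv, (hasDerivAt_W3_snd y1 y3 h2).deriv,
    (hasDerivAt_W3_thd y1 y2 h3).deriv, div_eq_zero_iff, div_eq_zero_iff,
    one_sub_div_sq_eq_zero_iff h1, one_sub_div_sq_eq_zero_iff h2, one_sub_div_sq_eq_zero_iff h3,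
    sq_eq_one_iff, sq_eq_one_iff]
  simp only [h2, or_false]
  tauto

lemma W3_eq_two_mul_of_sq_eq {y1 y2 y3 : ℂ} (h2 : y2 ≠ 0)
    (h : y2 ^ 2 = y1 + 1 / y1 + y3 + 1 / y3) : W3 y1 y2 y3 = 2 * y2 := by
  rw [W3, ← h, sq, mul_div_cancel_right₀ _ h2, two_mul]

lemma isCriticalValue_W3_iff (w : ℂ) :
    (∃ y1 y2 y3 : ℂ, y1 ≠ 0 ∧ y2 ≠ 0 ∧ y3 ≠ 0 ∧
        deriv (fun t => W3 t y2 y3) y1 = 0 ∧ deriv (fun t => W3 y1 t y3) y2 = 0 ∧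
        deriv (fun t => W3 y1 y2 t) y3 = 0 ∧ w = W3 y1 y2 y3) ↔
      w ^ 2 = 16 ∨ w ^ 2 = -16 := by
  constructor
  · rintro ⟨y1, y2, y3, h1, h2, h3, d1, d2, d3, rfl⟩
    obtain ⟨hy1, hy3, hy2⟩ := (deriv_W3_eq_zero_iff h1 h2 h3).1 ⟨d1, d2, d3⟩
    rw [W3_eq_two_mul_of_sq_eq h2 hy2, mul_pow]
    rcases hy1 with rfl | rfl <;> rcases hy3 with rfl | rfl <;> norm_num at hy2
    · exact .inl (by rw [hy2]; norm_num)
    · exact absurd hy2 h2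
    · exact absurd hy2 h2
    · exact .inr (by rw [hy2]; norm_num)
  · intro hw
    have hw0 : w / 2 ≠ 0 := by rintro h; rcases hw with hw | hw <;> simp_all
    obtain ⟨y, hy, hS⟩ : ∃ y : ℂ, (y = 1 ∨ y = -1) ∧ (w / 2) ^ 2 = y + 1 / y + y + 1 / y := by
      rcases hw with hw | hw
      · exact ⟨1, .inl rfl, by linear_combination hw / 4⟩
      · exact ⟨-1, .inr rfl, by linear_combination hw / 4⟩
    have hy0 : y ≠ 0 := by rcases hy with rfl | rfl <;> norm_num
    obtain ⟨d1, d2, d3⟩ := (deriv_W3_eq_zero_iff hy0 hw0 hy0).2 ⟨hy, hy, hS⟩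
    exact ⟨y, w / 2, y, hy0, hw0, hy0, d1, d2, d3, by rw [W3_eq_two_mul_of_sq_eq hw0 hS]; ring⟩

/-- The set of critical values of `W3` on `(ℂ*)³` is exactly `{4, −4, 4i, −4i}`. -/
theorem stmt12 :
    {w : ℂ | ∃ y1 y2 y3 : ℂ, y1 ≠ 0 ∧ y2 ≠ 0 ∧ y3 ≠ 0 ∧
        deriv (fun t => W3 t y2 y3) y1 = 0 ∧ deriv (fun t => W3 y1 t y3) y2 = 0 ∧
        deriv (fun t => W3 y1 y2 t) y3 = 0 ∧ w = W3 y1 y2 y3} =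
      {4, -4, 4 * Complex.I, -4 * Complex.I} := by
  ext w
  simp only [Set.mem_ofPred_eq, Set.mem_insert_iff, Set.mem_singleton_iff]
  rw [isCriticalValue_W3_iff, sq_eq_sixteen_or_sq_eq_neg_sixteen_iff]
end
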